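/- arXiv:1812.08150 — 11 statements merged into one kernel-verified Lean document; each statement's English description precedes it below -/
import Mathlib

section
/- Let G = (X ∪ Y, E) be a bipartite graph with |N(X)| ≥ |X| ≥ 1, where N(X) denotes the set of neighbors of X. Then G admits a nonempty envy-free matching, i.e., a nonempty matching M such that no unmatched vertex of X is adjacent to any matched vertex of Y. -/
open Classical in
lemma stmt_0_aux {X Y : Type} [Fintype X] [Fintype Y] (E : X → Y → Prop) :
    ∀ (n : ℕ) (A : Finset X) (B : Finset Y), A.card ≤ n → A.Nonempty →
    A.card ≤ (B.filter (fun y => ∃ x ∈ A, E x y)).card →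
    ∃ M : X → Y → Prop,
      (∀ x y, M x y → E x y) ∧
      (∀ x y, M x y → x ∈ A) ∧
      (∀ x y, M x y → y ∈ B) ∧
      (∀ x y y', M x y → M x y' → y = y') ∧
      (∀ x x' y, M x y → M x' y → x = x') ∧
      (∃ x y, M x y) ∧
      (∀ x, x ∈ A → (¬ ∃ y, M x y) → ∀ y, (∃ x', M x' y) → ¬ E x y) := by
  intro n
  induction n with
  | zero =>
    intro A B hcard hne _
    exact absurd (Finset.card_pos.mpr hne) (by omega)
  | succ n ih =>
    intro A B hcard hne hHall
    by_cases hall : ∀ T ⊆ A, T.card ≤ (B.filter (fun y => ∃ x ∈ T, E x y)).card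
    · -- Hall's condition holds: perfect matching of A
      have key : ∀ s : Finset {x // x ∈ A},
          s.card ≤ (s.biUnion (fun x => B.filter (fun y => E x.1 y))).card := by
        intro s
        have hsub : (s.image Subtype.val) ⊆ A := by
          intro x hx
          obtain ⟨⟨x', hx'⟩, _, rfl⟩ := Finset.mem_image.mp hx
          exact hx'
        have hcards : (s.image Subtype.val).card = s.card :=
          Finset.card_image_of_injective _ Subtype.val_injective
        have heq : s.biUnion (fun x => B.filter (fun y => E x.1 y)) =
            B.filter (fun y => ∃ x ∈ s.image Subtype.val, E x y) := by
          ext y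
          simp only [Finset.mem_biUnion, Finset.mem_filter, Finset.mem_image]
          constructor
          · rintro ⟨x, hxs, hyB, hxy⟩
            exact ⟨hyB, x.1, ⟨x, hxs, rfl⟩, hxy⟩
          · rintro ⟨hyB, x, ⟨x', hx's, rfl⟩, hxy⟩
            exact ⟨x', hx's, hyB, hxy⟩
        rw [heq, ← hcards]
        exact hall _ hsub
      obtain ⟨f, hfinj, hf⟩ :=
        (Finset.all_card_le_biUnion_card_iff_exists_injective
          (fun x : {x // x ∈ A} => B.filter (fun y => E x.1 y))).mp key
      refine ⟨fun x y => ∃ h : x ∈ A, f ⟨x, h⟩ = y, ?_, ?_, ?_, ?_, ?_, ?_, ?_⟩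
      · rintro x y ⟨h, rfl⟩
        exact (Finset.mem_filter.mp (hf ⟨x, h⟩)).2
      · rintro x y ⟨h, rfl⟩; exact h
      · rintro x y ⟨h, rfl⟩
        exact (Finset.mem_filter.mp (hf ⟨x, h⟩)).1
      · rintro x y y' ⟨h, rfl⟩ ⟨h', rfl⟩; rfl
      · rintro x x' y ⟨h, rfl⟩ ⟨h', heq⟩
        exact (congrArg Subtype.val (hfinj heq)).symm
      · obtain ⟨x, hx⟩ := hne
        exact ⟨x, f ⟨x, hx⟩, hx, rfl⟩
      · intro x hx hnm
        exact absurd ⟨f ⟨x, hx⟩, hx, rfl⟩ hnm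
    · -- Hall violator T
      push_neg at hall
      obtain ⟨T, hTA, hT⟩ := hall
      have hTlt : T.card < A.card := by
        rcases lt_or_eq_of_le (Finset.card_le_card hTA) with h | h
        · exact h
        · exfalso
          have hTAeq : T = A := Finset.eq_of_subset_of_card_le hTA (le_of_eq h.symm)
          rw [hTAeq] at hT; omega
      set NT := B.filter (fun y => ∃ x ∈ T, E x y) with hNT
      set A' := A \ T with hA'
      set B' := B \ NT with hB'
      have hA'card : A'.card = A.card - T.card := Finset.card_sdiff_of_subset hTA
      have hA'ne : A'.Nonempty := Finset.card_pos.mp (by omega)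
      -- neighbors of A within B are covered by NT ∪ neighbors of A' within B'
      have hcover : B.filter (fun y => ∃ x ∈ A, E x y) ⊆
          NT ∪ (B'.filter (fun y => ∃ x ∈ A', E x y)) := by
        intro y hy
        obtain ⟨hyB, x, hxA, hxy⟩ := Finset.mem_filter.mp hy
        by_cases hyNT : y ∈ NT
        · exact Finset.mem_union_left _ hyNT
        · refine Finset.mem_union_right _ (Finset.mem_filter.mpr
            ⟨Finset.mem_sdiff.mpr ⟨hyB, hyNT⟩, x, ?_, hxy⟩)
          refine Finset.mem_sdiff.mpr ⟨hxA, fun hxT => hyNT ?_⟩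
          exact Finset.mem_filter.mpr ⟨hyB, x, hxT, hxy⟩
      have hHall' : A'.card ≤ (B'.filter (fun y => ∃ x ∈ A', E x y)).card := by
        have h1 := Finset.card_le_card hcover
        have h2 := Finset.card_union_le NT (B'.filter (fun y => ∃ x ∈ A', E x y))
        omega
      obtain ⟨M, hME, hMA, hMB, hMf, hMinj, hMne, hMenvy⟩ :=
        ih A' B' (by omega) hA'ne hHall'
      refine ⟨M, hME, fun x y h => (Finset.mem_sdiff.mp (hMA x y h)).1,
        fun x y h => (Finset.mem_sdiff.mp (hMB x y h)).1, hMf, hMinj, hMne, ?_⟩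
      intro x hxA hnm y hy hExy
      obtain ⟨x', hx'⟩ := hy
      have hyB' : y ∈ B' := hMB x' y hx'
      obtain ⟨hyB, hyNT⟩ := Finset.mem_sdiff.mp hyB'
      by_cases hxT : x ∈ T
      · exact hyNT (Finset.mem_filter.mpr ⟨hyB, x, hxT, hExy⟩)
      · exact hMenvy x (Finset.mem_sdiff.mpr ⟨hxA, hxT⟩) hnm y ⟨x', hx'⟩ hExy

/-- A bipartite graph with vertex sides `X`, `Y` and edge relation `E`.
If the number of neighbors of `X` is at least `|X| ≥ 1`, then there is a
nonempty envy-free matching: a matching `M ⊆ E` such that no `M`-unmatched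
vertex of `X` is adjacent to an `M`-matched vertex of `Y`. -/
theorem stmt_0 {X Y : Type} [Fintype X] [Fintype Y]
    (E : X → Y → Prop)
    (hX : 1 ≤ Fintype.card X)
    (hN : Fintype.card X ≤ Nat.card {y : Y // ∃ x, E x y}) :
    ∃ M : X → Y → Prop,
      (∀ x y, M x y → E x y) ∧
      (∀ x y y', M x y → M x y' → y = y') ∧
      (∀ x x' y, M x y → M x' y → x = x') ∧
      (∃ x y, M x y) ∧
      (∀ x, (¬ ∃ y, M x y) → ∀ y, (∃ x', M x' y) → ¬ E x y) := by
  classical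
  have hcard : Nat.card {y : Y // ∃ x, E x y} =
      (Finset.univ.filter (fun y : Y => ∃ x ∈ Finset.univ, E x y)).card := by
    rw [Nat.card_eq_fintype_card, Fintype.card_subtype]
    congr 1
    ext y
    simp
  have hHall : (Finset.univ : Finset X).card ≤
      ((Finset.univ : Finset Y).filter (fun y => ∃ x ∈ Finset.univ, E x y)).card := by
    rw [Finset.card_univ, ← hcard]
    convert hN using 2
  have hne : (Finset.univ : Finset X).Nonempty := by
    rw [← Finset.card_pos, Finset.card_univ]; omega
  obtain ⟨M, hME, _, _, hMf, hMinj, hMne, hMenvy⟩ :=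
    stmt_0_aux E (Fintype.card X) Finset.univ Finset.univ
      (le_of_eq Finset.card_univ) hne (by convert hHall using 2; congr!)
  exact ⟨M, hME, hMf, hMinj, hMne, fun x h => hMenvy x (Finset.mem_univ x) h⟩
end

section
/- Let G = (X ∪ Y, E) be a bipartite graph, M a maximum-cardinality matching in G, X₀ the set of M-unmatched vertices of X, and X_S ⊆ X the set of vertices of X reachable from X₀ by M-alternating paths. Then the restriction of M to edges with an endpoint in X \ X_S is an envy-free matching. -/
/-- `M` is a matching contained in the edge relation `E` of a bipartite graph. -/
def IsMatching {X Y : Type} (E M : X → Y → Prop) : Prop :=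
  (∀ x y, M x y → E x y) ∧
  (∀ x y y', M x y → M x y' → y = y') ∧
  (∀ x x' y, M x y → M x' y → x = x')

/-- The `X`-vertices reachable from the `M`-unmatched vertices of `X` by
`M`-alternating paths: an unmatched vertex is reachable, and if `x` is
reachable, `(x,y)` is an edge, and `x'` is matched to `y`, then `x'` is
reachable. -/
inductive AltReach {X Y : Type} (E M : X → Y → Prop) : X → Prop
  | base (x : X) (h : ¬ ∃ y, M x y) : AltReach E M x
  | step (x x' : X) (y : Y) (hx : AltReach E M x) (he : E x y) (hm : M x' y) :
      AltReach E M x'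

/-- If `M` is a maximum-cardinality matching and `X_S` is the set of
`X`-vertices reachable from the unmatched vertices `X₀` by `M`-alternating
paths, then the restriction of `M` to edges with endpoint in `X \ X_S`
is an envy-free matching. -/
theorem stmt_1 {X Y : Type} [Fintype X] [Fintype Y]
    (E M : X → Y → Prop)
    (hM : IsMatching E M)
    (hmax : ∀ M' : X → Y → Prop, IsMatching E M' →
      Nat.card {p : X × Y // M' p.1 p.2} ≤ Nat.card {p : X × Y // M p.1 p.2}) :
    IsMatching E (fun x y => M x y ∧ ¬ AltReach E M x) ∧
    (∀ x, (¬ ∃ y, M x y ∧ ¬ AltReach E M x) →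
      ∀ y, (∃ x', M x' y ∧ ¬ AltReach E M x') → ¬ E x y) := by
  obtain ⟨hE, hX, hY⟩ := hM
  refine ⟨⟨fun x y h => hE x y h.1,
    fun x y y' h h' => hX x y y' h.1 h'.1,
    fun x x' y h h' => hY x x' y h.1 h'.1⟩, ?_⟩
  intro x hx y ⟨x', hx'M, hx'R⟩ hExy
  have hreach : AltReach E M x := by
    by_cases h : ∃ y, M x y
    · obtain ⟨y0, hy0⟩ := h
      by_contra hR
      exact hx ⟨y0, hy0, hR⟩
    · exact AltReach.base x h
  exact hx'R (AltReach.step x x' y hreach hExy hx'M)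
end

section
/- Let G = (X ∪ Y, E) be a bipartite graph with |N(X)| ≥ |X| ≥ 1. If M is a maximum matching, X₀ the M-unmatched vertices of X, and X_S the vertices of X reachable from X₀ by M-alternating paths, then X \ X_S is nonempty. -/
variable {X Y : Type} {E M : X → Y → Prop}

def rematch (M : X → Y → Prop) (x : X) (y : Y) : X → Y → Prop :=
  fun a b => (a = x ∧ b = y) ∨ (a ≠ x ∧ M a b)

lemma setOf_rematch (x : X) (y : Y) :
    {a | ∃ b, rematch M x y a b} = insert x {a | ∃ b, M a b} := by
  ext a
  by_cases ha : a = x <;> simp [rematch, ha]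

namespace IsMatching

lemma card_eq_ncard (hM : IsMatching E M) :
    Nat.card {p : X × Y // M p.1 p.2} = {x | ∃ y, M x y}.ncard := by
  rw [← Nat.card_coe_set_eq]
  refine Nat.card_eq_of_bijective (fun p => ⟨p.1.1, p.1.2, p.2⟩) ⟨?_, ?_⟩
  · rintro ⟨⟨x, y⟩, h⟩ ⟨⟨x', y'⟩, h'⟩ heq
    obtain rfl : x = x' := congrArg Subtype.val heq
    obtain rfl := hM.2.1 x y y' h h'
    rfl
  · rintro ⟨x, y, h⟩
    exact ⟨⟨(x, y), h⟩, rfl⟩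

lemma ncard_le_ncard_of_forall_matched [Finite X] (hM : IsMatching E M) {s : Set Y}
    (hs : ∀ y ∈ s, ∃ x, M x y) : s.ncard ≤ {x | ∃ y, M x y}.ncard := by
  choose f hf using hs
  rw [← Nat.card_coe_set_eq, ← Nat.card_coe_set_eq]
  refine Nat.card_le_card_of_injective (fun y => ⟨f y y.2, y, hf y y.2⟩) fun y y' h => ?_
  have hfy : f y y.2 = f y' y'.2 := congrArg Subtype.val h
  exact Subtype.ext (hM.2.1 _ _ _ (hf y y.2) (hfy ▸ hf y' y'.2))

lemma rematch (hM : IsMatching E M) {x : X} {y : Y} (he : E x y) (hy : ¬∃ a, M a y) :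
    IsMatching E (rematch M x y) := by
  refine ⟨?_, ?_, ?_⟩
  · rintro a b (⟨rfl, rfl⟩ | ⟨-, h⟩)
    exacts [he, hM.1 a b h]
  · rintro a b b' (⟨rfl, rfl⟩ | ⟨ha, h⟩) (⟨ha', rfl⟩ | ⟨ha', h'⟩)
    exacts [rfl, absurd rfl ha', absurd ha' ha, hM.2.1 a b b' h h']
  · rintro a a' b (⟨rfl, rfl⟩ | ⟨-, h⟩) (⟨rfl, hb⟩ | ⟨-, h'⟩)
    exacts [rfl, absurd ⟨a', h'⟩ hy, absurd ⟨a, hb ▸ h⟩ hy, hM.2.2 a a' b h h']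

end IsMatching

inductive AltPath (E M : X → Y → Prop) : List Y → X → Prop
  | nil (x : X) (h : ¬ ∃ y, M x y) : AltPath E M [] x
  | cons (l : List Y) (x x' : X) (y : Y) (hp : AltPath E M l x) (he : E x y) (hm : M x' y) :
      AltPath E M (y :: l) x'

namespace AltPath

lemma exists_suffix_of_mem (hM : IsMatching E M) {l : List Y} {x x' : X} {y : Y}
    (hp : AltPath E M l x) (hy : y ∈ l) (hm : M x' y) : ∃ t, t <:+ l ∧ AltPath E M t x' := by
  induction hp with
  | nil => simp at hy
  | cons l a a' b hp he hm' ih =>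
    rcases List.mem_cons.1 hy with rfl | hy
    · obtain rfl := hM.2.2 _ _ _ hm hm'
      exact ⟨_, List.suffix_refl _, .cons l a x' y hp he hm'⟩
    · obtain ⟨t, ht, htp⟩ := ih hy
      exact ⟨t, ht.trans (List.suffix_cons _ _), htp⟩

lemma rematch_of_notMem (hM : IsMatching E M) {l : List Y} {a x : X} {y₀ y : Y}
    (hp : AltPath E M l a) (hx : M x y₀) (hl : y₀ ∉ l) : AltPath E (rematch M x y) l a := by
  induction hp with
  | nil a h =>
    refine .nil a ?_
    rintro ⟨b, ⟨rfl, -⟩ | ⟨-, hb⟩⟩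
    exacts [h ⟨y₀, hx⟩, h ⟨b, hb⟩]
  | cons l a a' b hp he hm ih =>
    refine .cons l a a' b (ih fun h => hl (List.mem_cons_of_mem _ h)) he (Or.inr ⟨?_, hm⟩)
    rintro rfl
    exact hl (hM.2.1 _ _ _ hx hm ▸ List.mem_cons_self)

/-- Flip the augmenting path one edge at a time, starting from its end `x`. -/
lemma exists_matching_ssubset (hM : IsMatching E M) {l : List Y} {x : X} {y : Y}
    (hp : AltPath E M l x) (hl : l.Nodup) (he : E x y) (hy : ¬∃ a, M a y) :
    ∃ M', IsMatching E M' ∧ {a | ∃ b, M a b} ⊂ {a | ∃ b, M' a b} := by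
  induction l generalizing M x y with
  | nil =>
    cases hp with
    | nil _ hx =>
      refine ⟨rematch M x y, hM.rematch he hy, ?_⟩
      rw [setOf_rematch]
      exact Set.ssubset_insert hx
  | cons y₀ l ih =>
    cases hp with
    | cons _ x₁ _ _ hp he₀ hm₀ =>
      obtain ⟨hy₀, hl⟩ := List.nodup_cons.1 hl
      have hy₀_unmatched : ¬∃ a, rematch M x y a y₀ := by
        rintro ⟨a, ⟨-, rfl⟩ | ⟨ha, h⟩⟩
        exacts [hy ⟨x, hm₀⟩, ha (hM.2.2 _ _ _ h hm₀)]
      obtain ⟨M', hM', hlt⟩ :=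
        ih (hM.rematch he hy) (hp.rematch_of_notMem hM hm₀ hy₀) hl he₀ hy₀_unmatched
      have hx : x ∈ {a | ∃ b, M a b} := ⟨y₀, hm₀⟩
      refine ⟨M', hM', ?_⟩
      rwa [setOf_rematch, Set.insert_eq_of_mem hx] at hlt

end AltPath

namespace AltReach

lemma exists_unmatched {x : X} (h : AltReach E M x) : ∃ x₀, ¬∃ y, M x₀ y := by
  induction h with
  | base x h => exact ⟨x, h⟩
  | step _ _ _ _ _ _ ih => exact ih

lemma exists_altPath_nodup (hM : IsMatching E M) {x : X} (h : AltReach E M x) :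
    ∃ l, AltPath E M l x ∧ l.Nodup := by
  induction h with
  | base x h => exact ⟨[], .nil x h, List.nodup_nil⟩
  | step x x' y _ he hm ih =>
    obtain ⟨l, hp, hl⟩ := ih
    by_cases hy : y ∈ l
    · obtain ⟨t, ht, htp⟩ := hp.exists_suffix_of_mem hM hy hm
      exact ⟨t, htp, hl.sublist ht.sublist⟩
    · exact ⟨y :: l, .cons l x x' y hp he hm, List.nodup_cons.2 ⟨hy, hl⟩⟩

lemma exists_matched_of_adj [Finite X] (hM : IsMatching E M)
    (hmax : ∀ M' : X → Y → Prop, IsMatching E M' →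
      Nat.card {p : X × Y // M' p.1 p.2} ≤ Nat.card {p : X × Y // M p.1 p.2})
    {x : X} {y : Y} (h : AltReach E M x) (he : E x y) : ∃ a, M a y := by
  by_contra hy
  obtain ⟨l, hp, hl⟩ := h.exists_altPath_nodup hM
  obtain ⟨M', hM', hlt⟩ := hp.exists_matching_ssubset hM hl he hy
  have hle := hmax M' hM'
  rw [hM.card_eq_ncard, hM'.card_eq_ncard] at hle
  exact (Set.ncard_lt_ncard hlt).not_ge hle

end AltReach

theorem stmt_3_general {X Y : Type} [Fintype X]
    (E M : X → Y → Prop)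
    (hX : 1 ≤ Fintype.card X)
    (hN : Fintype.card X ≤ Nat.card {y : Y // ∃ x, E x y})
    (hM : IsMatching E M)
    (hmax : ∀ M' : X → Y → Prop, IsMatching E M' →
      Nat.card {p : X × Y // M' p.1 p.2} ≤ Nat.card {p : X × Y // M p.1 p.2}) :
    ∃ x : X, ¬ AltReach E M x := by
  by_contra! hreach
  obtain ⟨x⟩ := Fintype.card_pos_iff.mp hX
  obtain ⟨x₀, hx₀⟩ := (hreach x).exists_unmatched
  have hN_le : {y | ∃ x, E x y}.ncard ≤ {x | ∃ y, M x y}.ncard :=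
    hM.ncard_le_ncard_of_forall_matched fun y ⟨x, he⟩ =>
      (hreach x).exists_matched_of_adj hM hmax he
  have hlt : {x | ∃ y, M x y}.ncard < Nat.card X :=
    Set.ncard_lt_card fun h => hx₀ (h ▸ Set.mem_univ x₀ : x₀ ∈ {x | ∃ y, M x y})
  rw [← Nat.card_coe_set_eq] at hN_le
  rw [Nat.card_eq_fintype_card] at hlt
  exact hlt.not_ge (hN.trans hN_le)

/-- If `|N(X)| ≥ |X| ≥ 1` and `M` is a maximum matching, and `X_S` is the
set of `X`-vertices reachable from the `M`-unmatched vertices by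
`M`-alternating paths, then `X \ X_S` is nonempty. -/
theorem stmt_3 {X Y : Type} [Fintype X] [Fintype Y]
    (E M : X → Y → Prop)
    (hX : 1 ≤ Fintype.card X)
    (hN : Fintype.card X ≤ Nat.card {y : Y // ∃ x, E x y})
    (hM : IsMatching E M)
    (hmax : ∀ M' : X → Y → Prop, IsMatching E M' →
      Nat.card {p : X × Y // M' p.1 p.2} ≤ Nat.card {p : X × Y // M p.1 p.2}) :
    ∃ x : X, ¬ AltReach E M x :=
  stmt_3_general E M hX hN hM hmax
end

section
/- Let m ≥ 1, n ≥ 1, k ≥ 1 be integers. Consider a multicake with m islands in which all n agents share the same valuation: each of m−1 'small' islands has value 1, and one 'big' island has value n, so the total value is n+m−1. Then in every allocation assigning to each agent a union of at most k subintervals of islands (with pairwise disjoint pieces), at least one agent receives a piece of value at most k. -/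
/-!
Suppose every agent's piece is worth more than `k`. An agent with `b` of its `k` intervals on the
big island gets at most `k - b` from the small islands, where each interval is worth at most `1`;
so its part of the big island is worth more than `b`. That part has length at most `b`, which
forces `b ≥ 1`, so every agent holds more than a `1/n` share of the length of the big island,
and the `n` disjoint shares cannot fit.
-/

open MeasureTheory Set Function
open scoped Finset

section Multicake

variable {ι κ : Type*}

def islandPart (S : Set (ι × ℝ)) (i : ι) : Set ℝ :=
  (fun t => (i, t)) ⁻¹' S ∩ Icc 0 1

def intervalPiece (f : κ → ι) (lo hi : κ → ℝ) : Set (ι × ℝ) :=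
  ⋃ j, {f j} ×ˢ Icc (lo j) (hi j)

theorem measurableSet_intervalPiece [MeasurableSpace ι] [MeasurableSingletonClass ι]
    [Countable κ] (f : κ → ι) (lo hi : κ → ℝ) : MeasurableSet (intervalPiece f lo hi) :=
  MeasurableSet.iUnion fun _ => (measurableSet_singleton _).prod measurableSet_Icc

theorem MeasurableSet.islandPart [MeasurableSpace ι] {S : Set (ι × ℝ)} (hS : MeasurableSet S)
    (i : ι) : MeasurableSet (islandPart S i) :=
  (measurable_prodMk_left hS).inter measurableSet_Icc

theorem measure_islandPart_ne_top (S : Set (ι × ℝ)) (i : ι) : volume (islandPart S i) ≠ ⊤ :=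
  measure_ne_top_of_subset inter_subset_right measure_Icc_lt_top.ne

theorem measureReal_islandPart_le_one (S : Set (ι × ℝ)) (i : ι) :
    volume.real (islandPart S i) ≤ 1 :=
  (measureReal_mono inter_subset_right measure_Icc_lt_top.ne).trans (by simp)

theorem sum_measureReal_islandPart_le_one [MeasurableSpace ι] {α : Type*} [Fintype α]
    {S : α → Set (ι × ℝ)} (hS : ∀ a, MeasurableSet (S a)) (hd : Pairwise (Disjoint on S))
    (i : ι) : ∑ a, volume.real (islandPart (S a) i) ≤ 1 := by
  have hd' : Pairwise (Disjoint on fun a => islandPart (S a) i) := fun a b hab =>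
    ((hd hab).preimage _).mono inter_subset_left inter_subset_left
  rw [← measureReal_iUnion_fintype hd' (fun a => (hS a).islandPart i)
    fun a => measure_islandPart_ne_top _ _]
  exact (measureReal_mono (iUnion_subset fun _ => inter_subset_right)
    measure_Icc_lt_top.ne).trans (by simp)

variable [Fintype κ] [DecidableEq ι]

theorem islandPart_intervalPiece (f : κ → ι) (lo hi : κ → ℝ) (i : ι) :
    islandPart (intervalPiece f lo hi) i = ⋃ j ∈ ({j | f j = i} : Finset κ),
      islandPart ({f j} ×ˢ Icc (lo j) (hi j)) i := by
  ext t
  simp only [islandPart, intervalPiece, mem_inter_iff, mem_preimage, mem_iUnion, mem_prod,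
    mem_singleton_iff, Finset.mem_filter, Finset.mem_univ, true_and, exists_prop]
  grind

theorem measureReal_islandPart_intervalPiece_le (f : κ → ι) (lo hi : κ → ℝ) (i : ι) :
    volume.real (islandPart (intervalPiece f lo hi) i) ≤ #{j | f j = i} := by
  rw [islandPart_intervalPiece]
  calc _ ≤ ∑ j ∈ ({j | f j = i} : Finset κ),
        volume.real (islandPart ({f j} ×ˢ Icc (lo j) (hi j)) i) :=
        measureReal_biUnion_finset_le _ _
    _ ≤ ∑ j ∈ ({j | f j = i} : Finset κ), (1 : ℝ) :=
        Finset.sum_le_sum fun _ _ => measureReal_islandPart_le_one _ _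
    _ = #{j | f j = i} := by simp

variable [Fintype ι]

noncomputable def bigIslandValue (n : ℕ) (big : ι) (S : Set (ι × ℝ)) : ℝ :=
  ∑ i, (if i = big then (n : ℝ) else 1) * volume.real (islandPart S i)

theorem bigIslandValue_intervalPiece_le (n : ℕ) (big : ι) (f : κ → ι) (lo hi : κ → ℝ) :
    bigIslandValue n big (intervalPiece f lo hi) ≤ Fintype.card κ +
      (n * volume.real (islandPart (intervalPiece f lo hi) big) - #{j | f j = big}) := by
  set x := fun i => volume.real (islandPart (intervalPiece f lo hi) i)
  -- Each island is charged its number of intervals; the big island's surplus is added once.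
  have hterm : ∀ i, (if i = big then (n : ℝ) else 1) * x i ≤
      #{j | f j = i} + if i = big then n * x big - #{j | f j = big} else 0 := by
    intro i
    split_ifs with h
    · subst h; linarith
    · simpa using measureReal_islandPart_intervalPiece_le f lo hi i
  have hcard : (Fintype.card κ : ℝ) = ∑ i, (#{j | f j = i} : ℝ) := by
    exact_mod_cast Finset.card_eq_sum_card_fiberwise (s := .univ) (t := .univ)
      fun _ _ => Finset.mem_univ _
  rw [bigIslandValue]
  calc _ ≤ ∑ i, ((#{j | f j = i} : ℝ) + if i = big then n * x big - #{j | f j = big} else 0) :=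
        Finset.sum_le_sum fun i _ => hterm i
    _ = _ := by rw [Finset.sum_add_distrib, Finset.sum_ite_eq', if_pos (Finset.mem_univ _), hcard]

theorem one_lt_mul_measureReal_islandPart_of_card_lt (n : ℕ) (big : ι) (f : κ → ι)
    (lo hi : κ → ℝ) (h : Fintype.card κ < bigIslandValue n big (intervalPiece f lo hi)) :
    1 < n * volume.real (islandPart (intervalPiece f lo hi) big) := by
  have hx := measureReal_islandPart_intervalPiece_le f lo hi big
  have hlt : (#{j | f j = big} : ℝ) < n * volume.real (islandPart (intervalPiece f lo hi) big) :=
    by linarith [bigIslandValue_intervalPiece_le n big f lo hi]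
  have hpos : 0 < #{j | f j = big} := by
    by_contra! h0
    rw [Nat.le_zero.mp h0, Nat.cast_zero] at hx hlt
    nlinarith
  calc (1 : ℝ) ≤ #{j | f j = big} := by exact_mod_cast hpos
    _ < _ := hlt

end Multicake

theorem stmt_7_general (m n k : ℕ) (hm : 1 ≤ m) (hn : 1 ≤ n)
    (val : Set (Fin m × ℝ) → ℝ)
    (hval : ∀ Z : Set (Fin m × ℝ), val Z = ∑ i : Fin m,
      (if i = (⟨0, hm⟩ : Fin m) then (n : ℝ) else 1) *
        (MeasureTheory.volume ((fun t => (i, t)) ⁻¹' Z ∩ Set.Icc (0:ℝ) 1)).toReal)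
    (Z : Fin n → Set (Fin m × ℝ))
    (hfeas : ∀ a, ∃ (f : Fin k → Fin m) (lo hi : Fin k → ℝ),
      Z a = ⋃ j, {f j} ×ˢ Set.Icc (lo j) (hi j))
    (hdisj : Pairwise (Function.onFun Disjoint Z)) :
    ∃ a, val (Z a) ≤ k := by
  by_contra! hgt
  have hval' : ∀ S, val S = bigIslandValue n ⟨0, hm⟩ S := hval
  choose f lo hi hZ using hfeas
  have hZ' : ∀ a, Z a = intervalPiece (f a) (lo a) (hi a) := hZ
  have hbig : ∀ a, 1 < n * volume.real (islandPart (Z a) ⟨0, hm⟩) := fun a => by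
    rw [hZ' a]
    refine one_lt_mul_measureReal_islandPart_of_card_lt n _ _ _ _ ?_
    rw [Fintype.card_fin, ← hZ' a, ← hval']
    exact hgt a
  have hsum : ∑ a, volume.real (islandPart (Z a) ⟨0, hm⟩) ≤ 1 :=
    sum_measureReal_islandPart_le_one (fun a => hZ' a ▸ measurableSet_intervalPiece _ _ _) hdisj _
  have hne : (Finset.univ : Finset (Fin n)).Nonempty := Finset.univ_nonempty_iff.mpr ⟨⟨0, hn⟩⟩
  have hlt := Finset.sum_lt_sum_of_nonempty hne fun a _ => hbig a
  rw [← Finset.mul_sum, Finset.sum_const, Finset.card_univ, Fintype.card_fin, nsmul_one] at hlt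
  exact hlt.not_ge (mul_le_of_le_one_right n.cast_nonneg hsum)

/-- Upper bound example (Lemma 1). The multicake has `m` unit-interval
islands, modeled as `{i} × [0,1] ⊆ Fin m × ℝ`. All `n` agents share the same
valuation: island `0` (the "big" island) has value `n` and each other island
has value `1` (value = weighted Lebesgue length). In every `k`-feasible
allocation (each agent gets a union of at most `k` subintervals of islands,
pieces pairwise disjoint), some agent receives value at most `k`. -/
theorem stmt_7 (m n k : ℕ) (hm : 1 ≤ m) (hn : 1 ≤ n) (hk : 1 ≤ k)
    (val : Set (Fin m × ℝ) → ℝ)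
    (hval : ∀ Z : Set (Fin m × ℝ), val Z = ∑ i : Fin m,
      (if i = (⟨0, hm⟩ : Fin m) then (n : ℝ) else 1) *
        (MeasureTheory.volume ((fun t => (i, t)) ⁻¹' Z ∩ Set.Icc (0:ℝ) 1)).toReal)
    (Z : Fin n → Set (Fin m × ℝ))
    (hfeas : ∀ a, ∃ (f : Fin k → Fin m) (lo hi : Fin k → ℝ),
      Z a = ⋃ j, {f j} ×ˢ Set.Icc (lo j) (hi j))
    (hdisj : Pairwise (Function.onFun Disjoint Z)) :
    ∃ a, val (Z a) ≤ k :=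
  stmt_7_general m n k hm hn val hval Z hfeas hdisj
end

section
/- Let n ≥ 1, k ≥ 1 and m ≥ n·k − n + 1 be integers, and suppose each of n agents values a multicake of m islands at at least n + m − 1. If ℓ agents (1 ≤ ℓ ≤ n) each receive a piece worth at most k to every remaining agent and containing exactly k−1 whole islands, then the remaining multicake has at least m − ℓ(k−1) =: m' islands, m' ≥ (n−ℓ)k − (n−ℓ) + 1, and each remaining agent values the remainder at at least m' + (n−ℓ) − 1. -/
section helpers
variable {α : Type*}

lemma myV_empty (V : Set α → ℝ)
    (hadd : ∀ A B : Set α, Disjoint A B → V (A ∪ B) = V A + V B) : V ∅ = 0 := by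
  have := hadd ∅ ∅ (by simp)
  simp at this; linarith

lemma myV_biUnion (V : Set α → ℝ)
    (hadd : ∀ A B : Set α, Disjoint A B → V (A ∪ B) = V A + V B)
    {ι : Type*} [DecidableEq ι] (Z : ι → Set α) (s : Finset ι)
    (hdisj : ∀ a ∈ s, ∀ b ∈ s, a ≠ b → Disjoint (Z a) (Z b)) :
    V (⋃ j ∈ s, Z j) = ∑ j ∈ s, V (Z j) := by
  induction s using Finset.induction with
  | empty => simpa using myV_empty V hadd
  | @insert a s ha ih =>
    rw [Finset.set_biUnion_insert, hadd, Finset.sum_insert ha, ih]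
    · intro x hx y hy hxy
      exact hdisj x (Finset.mem_insert_of_mem hx) y (Finset.mem_insert_of_mem hy) hxy
    · rw [Set.disjoint_iUnion₂_right]
      intro b hb
      exact hdisj a (Finset.mem_insert_self a s) b (Finset.mem_insert_of_mem hb)
        (by rintro rfl; exact ha hb)

end helpers

/-- Invariant preservation in the main multicake algorithm (inside Lemma 4).
Islands are the unit intervals `{i} × [0,1)`. If `m ≥ nk − n + 1`, each of the
`n` agents values the multicake at least `n + m − 1`, and `ℓ` agents receive
pairwise-disjoint pieces, each consisting of exactly `k−1` whole islands plus
a proper leftmost part of a further island, and each worth at most `k` to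
every remaining agent, then: the remaining multicake has at least
`m − ℓ(k−1) =: m'` islands, `m' ≥ (n−ℓ)k − (n−ℓ) + 1`, and every remaining
agent values the remainder at least `m' + (n−ℓ) − 1`. -/
theorem stmt_8 (n k ℓ m : ℕ) (hn : 1 ≤ n) (hk : 1 ≤ k) (hl1 : 1 ≤ ℓ) (hln : ℓ ≤ n)
    (hm : n * k - n + 1 ≤ m)
    (island : Fin m → Set (Fin m × ℝ))
    (hisland : ∀ i, island i = {i} ×ˢ Set.Ico (0:ℝ) 1)
    (C : Set (Fin m × ℝ)) (hC : C = ⋃ i, island i)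
    (V : Fin n → Set (Fin m × ℝ) → ℝ)
    (hadd : ∀ i A B, Disjoint A B → V i (A ∪ B) = V i A + V i B)
    (hpos : ∀ i A, 0 ≤ V i A)
    (hVC : ∀ i, (n : ℝ) + m - 1 ≤ V i C)
    (Z : Fin ℓ → Set (Fin m × ℝ))
    (W : Fin ℓ → Finset (Fin m)) (p : Fin ℓ → Fin m) (d : Fin ℓ → ℝ)
    (hW : ∀ j, (W j).card = k - 1)
    (hd : ∀ j, 0 ≤ d j ∧ d j < 1)
    (hp : ∀ j, p j ∉ W j)
    (hZ : ∀ j, Z j = (⋃ i ∈ W j, island i) ∪ ({p j} ×ˢ Set.Ico 0 (d j)))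
    (hdisj : Pairwise (Function.onFun Disjoint Z))
    (hkval : ∀ i : Fin n, ℓ ≤ (i : ℕ) → ∀ j, V i (Z j) ≤ k) :
    (m ≤ {i : Fin m | (island i \ ⋃ j, Z j).Nonempty}.ncard + ℓ * (k - 1)) ∧
    (((n : ℤ) - ℓ) * k - ((n : ℤ) - ℓ) + 1 ≤ (m : ℤ) - ℓ * (k - 1)) ∧
    (∀ i : Fin n, ℓ ≤ (i : ℕ) →
      ((m : ℝ) - ℓ * ((k : ℝ) - 1)) + ((n : ℝ) - ℓ) - 1 ≤ V i (C \ ⋃ j, Z j)) := by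
  have hlnat : ℓ ≤ n := hln
  have hnk : n ≤ n * k := Nat.le_mul_of_pos_right n hk
  -- ℤ version of hm
  have hmZ : (n : ℤ) * k - n + 1 ≤ m := by
    have : ((n * k - n + 1 : ℕ) : ℤ) ≤ m := by exact_mod_cast hm
    rwa [Nat.cast_add, Nat.cast_sub hnk, Nat.cast_mul, Nat.cast_one] at this
  refine ⟨?part1, ?part2, ?part3⟩
  case part2 =>
    have hlZ : (ℓ : ℤ) ≤ n := by exact_mod_cast hln
    nlinarith [hmZ]
  case part1 =>
    set U : Set (Fin m × ℝ) := ⋃ j, Z j with hU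
    set S : Set (Fin m) := {i : Fin m | (island i \ U).Nonempty} with hS
    have hcompl : Sᶜ ⊆ ↑(Finset.univ.biUnion W) := by
      intro i hi
      simp only [hS, Set.mem_compl_iff, Set.mem_setOf_eq, Set.not_nonempty_iff_eq_empty,
        Set.diff_eq_empty] at hi
      by_contra hiW
      simp only [Finset.coe_biUnion, Finset.coe_univ, Set.mem_iUnion, Finset.mem_coe,
        Set.mem_univ, true_implies, exists_const] at hiW
      push_neg at hiW
      -- take t = max of d over all j
      obtain ⟨t, ht⟩ : ∃ t : ℝ, 0 ≤ t ∧ t < 1 ∧ ∀ j, d j ≤ t := by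
        have hne : (Finset.univ : Finset (Fin ℓ)).Nonempty := by
          have : 0 < ℓ := hl1
          simpa [Finset.univ_nonempty_iff] using Fin.pos_iff_nonempty.mp this
        refine ⟨Finset.univ.sup' hne d, ?_, ?_, ?_⟩
        · obtain ⟨j, hj⟩ := hne
          exact le_trans (hd j).1 (Finset.le_sup' d hj)
        · exact (Finset.sup'_lt_iff hne).mpr fun j _ => (hd j).2
        · intro j; exact Finset.le_sup' d (Finset.mem_univ j)
      have hpt : (i, t) ∈ island i := by
        rw [hisland]; exact ⟨rfl, ht.1, ht.2.1⟩
      have := hi hpt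
      simp only [hU, Set.mem_iUnion] at this
      obtain ⟨j, hj⟩ := this
      rw [hZ j] at hj
      rcases hj with hj | hj
      · simp only [Set.mem_iUnion] at hj
        obtain ⟨i', hi', hmem⟩ := hj
        rw [hisland] at hmem
        obtain ⟨rfl, -⟩ := hmem
        exact hiW j hi'
      · obtain ⟨-, h0, hlt⟩ := hj
        exact absurd (ht.2.2 j) (not_le.mpr hlt)
    have hScompl_card : Sᶜ.ncard ≤ ℓ * (k - 1) := by
      calc Sᶜ.ncard ≤ (Finset.univ.biUnion W).card := by
            have := Set.ncard_le_ncard hcompl (Set.toFinite _)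
            rwa [Set.ncard_coe_finset] at this
        _ ≤ ∑ j, (W j).card := Finset.card_biUnion_le
        _ = ℓ * (k - 1) := by simp [hW, Finset.sum_const, Finset.card_univ, mul_comm]
    have htot : S.ncard + Sᶜ.ncard = m := by
      rw [Set.ncard_add_ncard_compl]
      simp
    omega
  case part3 =>
    intro i hi
    set U : Set (Fin m × ℝ) := ⋃ j, Z j with hU
    have hZC : ∀ j, Z j ⊆ C := by
      intro j
      rw [hZ j, hC]
      apply Set.union_subset
      · exact Set.iUnion₂_subset fun i' _ => Set.subset_iUnion island i'
      · refine Set.Subset.trans ?_ (Set.subset_iUnion island (p j))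
        rw [hisland]
        rintro ⟨a, x⟩ ⟨rfl, h0, hx⟩
        exact ⟨rfl, h0, lt_of_lt_of_le hx (le_of_lt (hd j).2)⟩
    have hUC : U ⊆ C := Set.iUnion_subset hZC
    have hVU : V i U = ∑ j, V i (Z j) := by
      have := myV_biUnion (V i) (hadd i) Z Finset.univ
        (fun a _ b _ hab => hdisj hab)
      simpa [hU] using this
    have hsum : ∑ j, V i (Z j) ≤ (ℓ : ℝ) * k := by
      calc ∑ j, V i (Z j) ≤ ∑ _j : Fin ℓ, (k : ℝ) :=
            Finset.sum_le_sum fun j _ => hkval i hi j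
        _ = (ℓ : ℝ) * k := by simp [Finset.sum_const, Finset.card_univ, mul_comm]
    have hsplit : V i C = V i (C \ U) + V i U := by
      have h2 := hadd i (C \ U) U Set.disjoint_sdiff_left
      rwa [Set.diff_union_of_subset hUC] at h2
    have := hVC i
    have hnl : (ℓ : ℝ) ≤ n := by exact_mod_cast hln
    nlinarith [hpos i (C \ U)]
end

section
/- Let k ≥ 1 and n ≥ 1 be integers, and let V₁,...,V_n be nonatomic measures on a set A ∪ B, where A is 'barren' (V_j(A) < k for all j) and V_j(A ∪ B) ≥ k for at least one agent j, with B a unit interval. For each agent j, define d_j ∈ [0,1] ∪ {∞} by: d_j = ∞ if V_j(A ∪ B) < k, and otherwise d_j is a point with V_j(A ∪ B[d_j]) = k, where B[d] is the leftmost subinterval of B of length d. Then a minimizer i of d_j has d_i finite, and the piece Z_i = A ∪ B[d_i] satisfies V_i(Z_i) = k and V_j(Z_i) ≤ k for all j ≠ i. -/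
/-- Correctness of the Mark Auction (Lemma 2). `A` is a barren set, `B = [0,1]`
is a unit interval disjoint from `A`, with `V_j(A ∪ B) ≥ k` for some agent.
Each agent `j` bids `d j = ⊤` if `V_j(A ∪ B) < k`, and otherwise bids a point
`t` with `V_j(A ∪ B[t]) = k`, where `B[t] = [0,t]` is the leftmost subinterval
of length `t`. Then a minimizer `i` of the bids has a finite bid `t`, with
`V_i(A ∪ [0,t]) = k` and `V_j(A ∪ [0,t]) ≤ k` for every other agent `j`. -/
theorem stmt_9 (n k : ℕ) (hn : 1 ≤ n) (hk : 1 ≤ k)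
    (A : Set ℝ) (hAB : Disjoint A (Set.Icc (0:ℝ) 1))
    (V : Fin n → Set ℝ → ℝ)
    (hadd : ∀ j S T, Disjoint S T → V j (S ∪ T) = V j S + V j T)
    (hpos : ∀ j S, 0 ≤ V j S)
    (hmono : ∀ j (S T : Set ℝ), S ⊆ T → V j S ≤ V j T)
    (hbarren : ∀ j, V j A < k)
    (hsome : ∃ j, (k : ℝ) ≤ V j (A ∪ Set.Icc (0:ℝ) 1))
    (d : Fin n → WithTop ℝ)
    (hdinf : ∀ j, V j (A ∪ Set.Icc (0:ℝ) 1) < k → d j = ⊤)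
    (hdfin : ∀ j, (k : ℝ) ≤ V j (A ∪ Set.Icc (0:ℝ) 1) →
      ∃ t : ℝ, t ∈ Set.Icc (0:ℝ) 1 ∧ d j = (t : WithTop ℝ) ∧
        V j (A ∪ Set.Icc (0:ℝ) t) = k)
    (i : Fin n) (hi : ∀ j, d i ≤ d j) :
    ∃ t : ℝ, d i = (t : WithTop ℝ) ∧ V i (A ∪ Set.Icc (0:ℝ) t) = k ∧
      ∀ j, j ≠ i → V j (A ∪ Set.Icc (0:ℝ) t) ≤ k := by
  obtain ⟨j0, hj0⟩ := hsome
  obtain ⟨s0, hs0mem, hds0, _⟩ := hdfin j0 hj0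
  -- d i is finite
  have hifin : (k : ℝ) ≤ V i (A ∪ Set.Icc (0:ℝ) 1) := by
    by_contra h
    have h1 := hdinf i (lt_of_not_ge h)
    have h2 := hi j0
    rw [h1, hds0] at h2
    simp at h2
  obtain ⟨t, htmem, hdt, hVt⟩ := hdfin i hifin
  refine ⟨t, hdt, hVt, ?_⟩
  intro j hj
  by_cases hjk : (k : ℝ) ≤ V j (A ∪ Set.Icc (0:ℝ) 1)
  · obtain ⟨s, hsmem, hds, hVs⟩ := hdfin j hjk
    have hts : t ≤ s := by
      have := hi j
      rw [hdt, hds] at this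
      exact_mod_cast this
    calc V j (A ∪ Set.Icc (0:ℝ) t) ≤ V j (A ∪ Set.Icc (0:ℝ) s) :=
          hmono j _ _ (Set.union_subset_union_right _ (Set.Icc_subset_Icc_right hts))
      _ = k := hVs
  · calc V j (A ∪ Set.Icc (0:ℝ) t) ≤ V j (A ∪ Set.Icc (0:ℝ) 1) :=
          hmono j _ _ (Set.union_subset_union_right _ (Set.Icc_subset_Icc_right htmem.2))
      _ ≤ k := le_of_lt (lt_of_not_ge hjk)
end

section
/- Let m ≥ 2k−1 and let a₁ ≤ a₂ ≤ ... ≤ a_m be nonnegative reals (island values in increasing order). Arrange them on positions so that a₁ goes to position 1, a₂ to position m, a₃ to position 2, a₄ to position m−1, and so on (alternating ends). Then the sum of the values in the k−1 leftmost positions is at most the sum of the values in the k−1 rightmost positions, and the sum of the values in the k−1 rightmost positions is at most the sum of the values in the k leftmost positions. -/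
/-- Auxiliary claim of the two-agent envy-free algorithm. Island values
`a 0 ≤ a 1 ≤ ...` (nonnegative, sorted increasingly) are arranged on
positions `0,...,m−1` alternating ends: position `j` gets `a (2j)` if
`2j < m` (left side), and otherwise (right side, at distance `m−1−j` from
the right end) gets `a (2(m−1−j)+1)`. If `m ≥ 2k−1`, then the sum of the
`k−1` leftmost positions is at most the sum of the `k−1` rightmost
positions, which in turn is at most the sum of the `k` leftmost positions. -/
theorem stmt_13 (m k : ℕ) (hk : 1 ≤ k) (hm : 2 * k - 1 ≤ m)
    (a : ℕ → ℝ) (ha : Monotone a) (hpos : ∀ i, 0 ≤ a i)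
    (b : ℕ → ℝ)
    (hb : ∀ j < m, b j = if 2 * j < m then a (2 * j) else a (2 * (m - 1 - j) + 1)) :
    (∑ j ∈ Finset.range (k - 1), b j ≤ ∑ j ∈ Finset.Ico (m - (k - 1)) m, b j) ∧
    (∑ j ∈ Finset.Ico (m - (k - 1)) m, b j ≤ ∑ j ∈ Finset.range k, b j) := by
  have hleft : ∀ n, n ≤ k → ∑ j ∈ Finset.range n, b j = ∑ j ∈ Finset.range n, a (2 * j) := by
    intro n hn
    apply Finset.sum_congr rfl
    intro j hj
    simp only [Finset.mem_range] at hj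
    have hjm : j < m := by omega
    rw [hb j hjm, if_pos (by omega)]
  have hright : ∑ j ∈ Finset.Ico (m - (k - 1)) m, b j
      = ∑ i ∈ Finset.range (k - 1), a (2 * i + 1) := by
    apply Finset.sum_nbij' (fun j => m - 1 - j) (fun i => m - 1 - i)
    · intro j hj
      simp only [Finset.mem_Ico] at hj
      simp only [Finset.mem_range]
      omega
    · intro i hi
      simp only [Finset.mem_range] at hi
      simp only [Finset.mem_Ico]
      omega
    · intro j hj
      simp only [Finset.mem_Ico] at hj
      omega
    · intro i hi
      simp only [Finset.mem_range] at hi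
      omega
    · intro j hj
      simp only [Finset.mem_Ico] at hj
      rw [hb j hj.2, if_neg (by omega)]
  constructor
  · rw [hleft (k - 1) (by omega), hright]
    apply Finset.sum_le_sum
    intro i _
    exact ha (by omega)
  · rw [hleft k le_rfl, hright]
    have hk' : k = (k - 1) + 1 := by omega
    conv_rhs => rw [hk', Finset.sum_range_succ']
    have : ∑ i ∈ Finset.range (k - 1), a (2 * i + 1)
        ≤ ∑ i ∈ Finset.range (k - 1), a (2 * (i + 1)) := by
      apply Finset.sum_le_sum
      intro i _
      exact ha (by omega)
    have h0 : (0:ℝ) ≤ a (2 * 0) := hpos _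
    linarith
end

section
/- Let n ≥ 1 and k ≥ 1, let Z₁,...,Z_n be pieces where Z_j is a union of m_j intervals with Σ_j m_j ≤ m + n − 1, and let V be an additive measure with V(Z₁) + ... + V(Z_n) ≥ n·k + max(k,m) − k. Let D = {j : V(Z_j) ≥ k} and d = |D|. Then d ≥ 1, and there exists j ∈ D with V(Z_j) ≥ max(k, m_j). -/
/-- Core counting argument of Theorem 3(b). Pieces `Z_j` have values
`v j ≥ 0` and consist of `mvec j ≥ 1` intervals with `∑ mvec j ≤ m + n − 1`.
If the total value is at least `n·k + max(k,m) − k`, then the set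
`D = {j : v j ≥ k}` is nonempty, and some `j ∈ D` has `v j ≥ max(k, mvec j)`. -/
theorem stmt_14 (n m k : ℕ) (hn : 1 ≤ n) (hk : 1 ≤ k) (hm : 1 ≤ m)
    (v : Fin n → ℝ) (hv : ∀ j, 0 ≤ v j)
    (mvec : Fin n → ℕ) (hmv : ∀ j, 1 ≤ mvec j)
    (hcount : ∑ j, mvec j ≤ m + n - 1)
    (htotal : (n : ℝ) * k + max (k : ℝ) (m : ℝ) - k ≤ ∑ j, v j) :
    (∃ j, (k : ℝ) ≤ v j) ∧
    (∃ j, (k : ℝ) ≤ v j ∧ max (k : ℝ) (mvec j : ℝ) ≤ v j) := by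
  have hne : (Finset.univ : Finset (Fin n)).Nonempty := by
    simpa [Finset.univ_nonempty_iff] using Fin.pos_iff_nonempty.mp hn
  have hmaxk : (k : ℝ) ≤ max (k : ℝ) m := le_max_left _ _
  have hex : ∃ j, (k : ℝ) ≤ v j := by
    by_contra h
    push_neg at h
    have h1 : ∑ j, v j < ∑ _j : Fin n, (k : ℝ) :=
      Finset.sum_lt_sum_of_nonempty hne fun j _ => h j
    rw [Finset.sum_const, Finset.card_univ, Fintype.card_fin, nsmul_eq_mul] at h1
    linarith
  refine ⟨hex, ?_⟩
  by_contra h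
  push_neg at h
  obtain ⟨j0, hj0⟩ := hex
  set D : Finset (Fin n) := Finset.univ.filter (fun j => (k : ℝ) ≤ v j) with hD
  have hj0D : j0 ∈ D := by simp [hD, hj0]
  have hd1 : 1 ≤ D.card := Finset.card_pos.mpr ⟨j0, hj0D⟩
  have hcardc : Dᶜ.card + D.card = n := by
    have := Finset.card_add_card_compl D
    rw [Fintype.card_fin] at this
    omega
  -- pointwise bound
  set f : Fin n → ℝ := fun j => if (k : ℝ) ≤ v j then (mvec j : ℝ) else k with hf
  have hlt : ∀ j, v j < f j := by
    intro j
    by_cases hj : (k : ℝ) ≤ v j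
    · have h2 := h j hj
      rw [lt_max_iff] at h2
      rcases h2 with h2 | h2
      · linarith
      · simp [hf, hj, h2]
    · simp [hf, hj]
      exact lt_of_not_ge hj
  have hsum : ∑ j, v j < ∑ j, f j :=
    Finset.sum_lt_sum_of_nonempty hne fun j _ => hlt j
  -- split the sum of f
  have hcompl : Dᶜ = Finset.univ.filter (fun j => ¬ (k : ℝ) ≤ v j) := by
    rw [hD, Finset.compl_filter]
  have hsplit : ∑ j, f j = (∑ j ∈ D, (mvec j : ℝ)) + (Dᶜ.card : ℝ) * k := by
    rw [hf, Finset.sum_ite, Finset.sum_const, nsmul_eq_mul, hcompl]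
  -- nat counting
  have hsplitn : ∑ j ∈ D, mvec j + ∑ j ∈ Dᶜ, mvec j = ∑ j, mvec j :=
    Finset.sum_add_sum_compl D mvec
  have hclow : Dᶜ.card ≤ ∑ j ∈ Dᶜ, mvec j := by
    calc Dᶜ.card = ∑ _j ∈ Dᶜ, 1 := by simp
    _ ≤ ∑ j ∈ Dᶜ, mvec j := Finset.sum_le_sum fun j _ => hmv j
  have hnat : ∑ j ∈ D, mvec j + Dᶜ.card + 1 ≤ m + n := by omega
  -- cast to ℝ
  have hnatR : (∑ j ∈ D, (mvec j : ℝ)) + (Dᶜ.card : ℝ) + 1 ≤ (m : ℝ) + n := by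
    have := (Nat.cast_le (α := ℝ)).mpr hnat
    push_cast at this
    linarith
  have hcR : (Dᶜ.card : ℝ) + D.card = n := by exact_mod_cast hcardc
  have hdR : (1 : ℝ) ≤ D.card := by exact_mod_cast hd1
  have hkR : (1 : ℝ) ≤ k := by exact_mod_cast hk
  have hmR : (m : ℝ) ≤ max (k : ℝ) m := le_max_right _ _
  -- combine: ∑ f ≤ n*k + max - k
  have hfin : ∑ j, f j ≤ (n : ℝ) * k + max (k : ℝ) m - k := by
    rw [hsplit]
    nlinarith [hnatR, hcR, hdR, hkR, hmR]
  linarith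
end

section
/- Let C be a multicake with m islands, k = 1, n ≥ 1, and valuations V₁,...,V_n with 1-feasible maximin share MMS¹ᵢ(C) ≥ 1 for each agent i (i.e., each agent i has n pairwise-disjoint intervals Y_{i,1},...,Y_{i,n} in C each of value ≥ 1 to i). Suppose agent n is allocated a leftmost subinterval Z_n of some island with V_i(Z_n) ≤ 1 for every i ≤ n−1. Then for each remaining agent i ≤ n−1, the remainder C \ Z_n contains n−1 pairwise-disjoint intervals each worth at least 1 to i. -/
private lemma island_lemma (mI : ℕ) (C : Set ℝ)
    (hC : C = {x : ℝ | ∃ i < mI, x ∈ Set.Icc ((2 * i : ℕ) : ℝ) ((2 * i : ℕ) + 1)})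
    (Y : Set ℝ) (hYC : Y ⊆ C) (hYo : Y.OrdConnected)
    (b : ℕ) (p : ℝ) (hp : p ∈ Y) (hp1 : ((2 * b : ℕ) : ℝ) ≤ p) (hp2 : p ≤ ((2 * b : ℕ) : ℝ) + 1)
    (x : ℝ) (hx : x ∈ Y) :
    ((2 * b : ℕ) : ℝ) ≤ x ∧ x ≤ ((2 * b : ℕ) : ℝ) + 1 := by
  have hxC := hYC hx
  rw [hC] at hxC
  obtain ⟨ix, hixm, hx1, hx2⟩ := hxC
  push_cast at hx1 hx2 hp1 hp2 ⊢
  rcases lt_trichotomy ix b with h | h | h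
  · exfalso
    have hb' : (ix : ℝ) + 1 ≤ (b : ℝ) := by exact_mod_cast h
    have hg : (2 * ix : ℝ) + 1.5 ∈ Y := hYo.out hx hp ⟨by norm_num; linarith, by norm_num; linarith⟩
    have hgC := hYC hg
    rw [hC] at hgC
    obtain ⟨ig, higm, hg1, hg2⟩ := hgC
    push_cast at hg1 hg2
    have h1 : 2 * ig < 2 * ix + 2 := by exact_mod_cast (by norm_num at hg1; linarith : (2 * ig : ℝ) < 2 * ix + 2)
    have h2 : 2 * ix < 2 * ig := by exact_mod_cast (by norm_num at hg2; linarith : (2 * ix : ℝ) < 2 * ig)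
    omega
  · subst h; exact ⟨hx1, hx2⟩
  · exfalso
    have hb' : (b : ℝ) + 1 ≤ (ix : ℝ) := by exact_mod_cast h
    have hg : (2 * b : ℝ) + 1.5 ∈ Y := hYo.out hp hx ⟨by norm_num; linarith, by norm_num; linarith⟩
    have hgC := hYC hg
    rw [hC] at hgC
    obtain ⟨ig, higm, hg1, hg2⟩ := hgC
    push_cast at hg1 hg2
    have h1 : 2 * ig < 2 * b + 2 := by exact_mod_cast (by norm_num at hg1; linarith : (2 * ig : ℝ) < 2 * b + 2)
    have h2 : 2 * b < 2 * ig := by exact_mod_cast (by norm_num at hg2; linarith : (2 * b : ℝ) < 2 * ig)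
    omega

private lemma order_lemma (S T : Set ℝ) (hS : S.OrdConnected) (hT : T.OrdConnected)
    (hd : Disjoint S T) :
    (∀ x ∈ S, ∀ y ∈ T, x ≤ y) ∨ (∀ x ∈ T, ∀ y ∈ S, x ≤ y) := by
  by_contra h
  push_neg at h
  obtain ⟨⟨a, ha, b, hb, hab⟩, c, hc, d, hd', hcd⟩ := h
  rcases le_or_gt d b with h1 | h1
  · exact Set.disjoint_left.mp hd (hS.out hd' ha ⟨h1, hab.le⟩) hb
  · exact Set.disjoint_left.mp hd hd' (hT.out hb hc ⟨h1.le, hcd.le⟩)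

/-- Inductive step of the MMS-fairness theorem for `k = 1`. The multicake
`C` consists of `mI` unit-interval islands `[2i, 2i+1]` on the line. Each
agent `i` has a nonnegative additive valuation `V i`, and MMS witnesses:
`n` pairwise-disjoint intervals `Y i 0, ..., Y i (n−1)` inside `C`, each
worth at least `1` to `i`. Agent `a0` is allocated a leftmost subinterval
`Z = [2b, c]` of island `b`, worth at most `1` to each other agent. Then for
every remaining agent `i`, the remainder `C \ Z` contains `n − 1`
pairwise-disjoint intervals, each worth at least `1` to `i`. -/
theorem stmt_16 (n mI : ℕ) (hn : 1 ≤ n)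
    (C : Set ℝ)
    (hC : C = {x : ℝ | ∃ i < mI, x ∈ Set.Icc ((2 * i : ℕ) : ℝ) ((2 * i : ℕ) + 1)})
    (V : Fin n → Set ℝ → ℝ)
    (hadd : ∀ i S T, Disjoint S T → V i (S ∪ T) = V i S + V i T)
    (hpos : ∀ i S, 0 ≤ V i S)
    (Y : Fin n → Fin n → Set ℝ)
    (hYsub : ∀ i j, Y i j ⊆ C)
    (hYint : ∀ i j, (Y i j).OrdConnected)
    (hYval : ∀ i j, 1 ≤ V i (Y i j))
    (hYdisj : ∀ i, Pairwise (Function.onFun Disjoint (Y i)))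
    (b : ℕ) (hb : b < mI) (c : ℝ)
    (hc : ((2 * b : ℕ) : ℝ) ≤ c ∧ c ≤ ((2 * b : ℕ) : ℝ) + 1)
    (Zn : Set ℝ) (hZn : Zn = Set.Icc ((2 * b : ℕ) : ℝ) c)
    (a0 : Fin n)
    (hZval : ∀ i, i ≠ a0 → V i Zn ≤ 1) :
    ∀ i, i ≠ a0 → ∃ W : Fin (n - 1) → Set ℝ,
      (∀ j, W j ⊆ C \ Zn ∧ (W j).OrdConnected ∧ 1 ≤ V i (W j)) ∧
      Pairwise (Function.onFun Disjoint W) := by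
  intro i hi
  have hV0 : V i ∅ = 0 := by
    have h := hadd i ∅ ∅ (by simp)
    simp at h
    linarith
  have hmono : ∀ S T : Set ℝ, S ⊆ T → V i S ≤ V i T := by
    intro S T hST
    have hd : Disjoint S (T \ S) := Set.disjoint_left.mpr (fun x hx hx2 => hx2.2 hx)
    have h := hadd i S (T \ S) hd
    rw [Set.union_diff_cancel hST] at h
    have := hpos i (T \ S)
    linarith
  have hsplit : ∀ S T : Set ℝ, V i S = V i (S \ T) + V i (S ∩ T) := by
    intro S T
    have hd : Disjoint (S \ T) (S ∩ T) := Set.disjoint_left.mpr (fun x hx hx2 => hx.2 hx2.2)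
    have h := hadd i (S \ T) (S ∩ T) hd
    rwa [Set.diff_union_inter] at h
  have hne_of_pos : ∀ S : Set ℝ, 0 < V i S → S.Nonempty := by
    intro S hS
    rcases S.eq_empty_or_nonempty with h | h
    · rw [h, hV0] at hS; exact absurd hS (lt_irrefl 0)
    · exact h
  have haux : ∀ j1 j2 : Fin n, j1 ≠ j2 → 0 < V i (Y i j1 ∩ Zn) → 0 < V i (Y i j2 ∩ Zn) →
      (∀ x ∈ Y i j1, ∀ y ∈ Y i j2, x ≤ y) → False := by
    intro j1 j2 hne h1 h2 hle
    obtain ⟨p1, hp1Y, hp1Z⟩ := hne_of_pos _ h1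
    obtain ⟨p2, hp2Y, hp2Z⟩ := hne_of_pos _ h2
    rw [hZn] at hp1Z hp2Z
    have hsub : Y i j1 ⊆ Zn := by
      intro x hx
      have hx2b := (island_lemma mI C hC (Y i j1) (hYsub i j1) (hYint i j1) b p1 hp1Y hp1Z.1
        (hp1Z.2.trans hc.2) x hx).1
      rw [hZn]
      exact ⟨hx2b, (hle x hx p2 hp2Y).trans hp2Z.2⟩
    have hZ1 : V i Zn = V i (Zn \ Y i j1) + V i (Y i j1) := by
      have h := hsplit Zn (Y i j1)
      rwa [Set.inter_eq_self_of_subset_right hsub] at h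
    have hsub2 : Y i j2 ∩ Zn ⊆ Zn \ Y i j1 := by
      intro x hx
      exact ⟨hx.2, fun hx1 => Set.disjoint_left.mp (hYdisj i hne) hx1 hx.1⟩
    have hm := hmono _ _ hsub2
    have := hYval i j1
    linarith [hZval i hi]
  have hkey : ∀ j1 j2 : Fin n, j1 ≠ j2 → 0 < V i (Y i j1 ∩ Zn) → 0 < V i (Y i j2 ∩ Zn) → False := by
    intro j1 j2 hne h1 h2
    rcases order_lemma _ _ (hYint i j1) (hYint i j2) (hYdisj i hne) with h | h
    · exact haux j1 j2 hne h1 h2 h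
    · exact haux j2 j1 hne.symm h2 h1 h
  obtain ⟨j0, hj0⟩ : ∃ j0 : Fin n, ∀ j, j ≠ j0 → 1 ≤ V i (Y i j \ Zn) := by
    by_cases hbad : ∃ j' : Fin n, V i (Y i j' \ Zn) < 1
    · obtain ⟨j', hj'⟩ := hbad
      refine ⟨j', fun j hj => ?_⟩
      by_contra hlt
      push_neg at hlt
      have h1 : 0 < V i (Y i j ∩ Zn) := by
        have h := hsplit (Y i j) Zn
        have := hYval i j
        linarith
      have h2 : 0 < V i (Y i j' ∩ Zn) := by
        have h := hsplit (Y i j') Zn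
        have := hYval i j'
        linarith
      exact hkey j j' hj h1 h2
    · push_neg at hbad
      exact ⟨⟨0, hn⟩, fun j _ => hbad j⟩
  have hWord : ∀ e : Fin n, (Y i e \ Zn).OrdConnected := by
    intro e
    constructor
    rintro x ⟨hxY, hxZ⟩ y ⟨hyY, hyZ⟩ z hz
    have hzY : z ∈ Y i e := (hYint i e).out hxY hyY hz
    refine ⟨hzY, fun hzZ => ?_⟩
    rw [hZn] at hzZ hxZ
    have hx2b := (island_lemma mI C hC (Y i e) (hYsub i e) (hYint i e) b z hzY hzZ.1
      (hzZ.2.trans hc.2) x hxY).1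
    have hcx : c < x := by
      by_contra hcx
      push_neg at hcx
      exact hxZ ⟨hx2b, hcx⟩
    linarith [hz.1, hzZ.2]
  have hn1 : n - 1 + 1 = n := Nat.succ_pred_eq_of_pos hn
  refine ⟨fun j => Y i (Fin.cast hn1 ((Fin.cast hn1.symm j0).succAbove j)) \ Zn,
    fun j => ⟨?_, hWord _, ?_⟩, ?_⟩
  · exact Set.diff_subset_diff_left (hYsub i _)
  · apply hj0
    intro heq
    apply Fin.succAbove_ne (Fin.cast hn1.symm j0) j
    apply Fin.ext
    have h := congrArg Fin.val heq
    simpa using h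
  · intro j1 j2 hne
    have hne' : Fin.cast hn1 ((Fin.cast hn1.symm j0).succAbove j1)
        ≠ Fin.cast hn1 ((Fin.cast hn1.symm j0).succAbove j2) := by
      intro h
      apply hne
      have h' : (Fin.cast hn1.symm j0).succAbove j1 = (Fin.cast hn1.symm j0).succAbove j2 := by
        apply Fin.ext
        have := congrArg Fin.val h
        simpa using this
      exact Fin.succAbove_right_injective h'
    exact Disjoint.mono Set.diff_subset Set.diff_subset (hYdisj i hne')
end

section
/- Let V be a nonatomic measure on an interval (0,m) and k ≥ 1. Define U(x,y) as the maximum of V over unions of at most k subintervals of (x,y). Then x ↦ U(0,x) is continuous and nondecreasing from 0 to U(0,m), and x ↦ U(x,m) is continuous and nonincreasing from U(0,m) to 0; consequently there exists x_A ∈ (0,m) with U(0,x_A) = U(x_A,m). -/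
/-!
Since the density is nonnegative, the best packing of `[x, y]` by at most `k` disjoint closed
intervals is worth the whole `V [x, y]`: it is never worth more, and `[x', y]` for `x' ↓ x`,
padded with `k - 1` distinct points of `[x, x')` (which carry no mass), comes arbitrarily close.
Thus `U 0 x` and `U x m` are the two primitives of the density, continuous and monotone, and the
halving point comes from the intermediate value theorem applied to their difference.
-/

open MeasureTheory Set Filter Topology Function

def packingValues (k : ℕ) (V : Set ℝ → ℝ) (x y : ℝ) : Set ℝ :=
  {s : ℝ | ∃ a b : Fin k → ℝ,
    (∀ j, x ≤ a j ∧ a j ≤ b j ∧ b j ≤ y) ∧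
    Pairwise (Disjoint on fun j => Icc (a j) (b j)) ∧
    s = ∑ j, V (Icc (a j) (b j))}

lemma sum_setIntegral_le_setIntegral_of_pairwise_disjoint {α ι : Type*} [MeasurableSpace α]
    [Fintype ι] {μ : Measure α} {f : α → ℝ} {s : Set α} {t : ι → Set α}
    (hf : IntegrableOn f s μ) (hf_nonneg : 0 ≤ᵐ[μ.restrict s] f)
    (ht : ∀ i, MeasurableSet (t i)) (hts : ∀ i, t i ⊆ s) (hdisj : Pairwise (Disjoint on t)) :
    ∑ i, ∫ x in t i, f x ∂μ ≤ ∫ x in s, f x ∂μ := by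
  rw [← integral_iUnion_fintype ht hdisj fun i => hf.mono_set (hts i)]
  exact setIntegral_mono_set hf hf_nonneg (Eventually.of_forall (iUnion_subset hts))

lemma pairwise_disjoint_Icc_of_lt {ι : Type*} [LinearOrder ι] {a b : ι → ℝ}
    (h : ∀ i j, i < j → b i < a j) : Pairwise (Disjoint on fun j => Icc (a j) (b j)) := by
  intro i j hij
  rcases hij.lt_or_gt with hij | hji
  · exact disjoint_left.2 fun z hi hj => (h i j hij).not_ge (hj.1.trans hi.2)
  · exact disjoint_left.2 fun z hi hj => (h j i hji).not_ge (hi.1.trans hj.2)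

lemma apply_Icc_mem_packingValues {k : ℕ} (hk : 1 ≤ k) {V : Set ℝ → ℝ}
    (hV : ∀ c, V {c} = 0) {x x' y : ℝ} (hxx' : x < x') (hx'y : x' ≤ y) :
    V (Icc x' y) ∈ packingValues k V x y := by
  have hk₀ : (0 : ℝ) < k := by exact_mod_cast hk
  set δ := (x' - x) / k
  have hδ : 0 < δ := div_pos (sub_pos.2 hxx') hk₀
  have hkδ : (k : ℝ) * δ = x' - x := mul_div_cancel₀ _ hk₀.ne'
  set a : Fin k → ℝ := fun j => x + ((j : ℕ) + 1 : ℝ) * δ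
  set b : Fin k → ℝ := fun j => if (j : ℕ) + 1 = k then y else a j
  have ha_le : ∀ j : Fin k, a j ≤ x' := fun j => by
    have : ((j : ℕ) + 1 : ℝ) ≤ k := by exact_mod_cast j.isLt
    simp only [a]; nlinarith
  have ha_last : ∀ j : Fin k, (j : ℕ) + 1 = k → a j = x' := fun j hj => by
    have : ((j : ℕ) + 1 : ℝ) = k := by exact_mod_cast hj
    simp only [a, this, hkδ]; ring
  refine ⟨a, b, fun j => ?_, pairwise_disjoint_Icc_of_lt fun i j hij => ?_, ?_⟩
  · have hx : x ≤ a j := by simp only [a]; nlinarith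
    by_cases hj : (j : ℕ) + 1 = k
    · simp only [b, if_pos hj, ha_last j hj]; exact ⟨hxx'.le, hx'y, le_rfl⟩
    · simp only [b, if_neg hj]; exact ⟨hx, le_rfl, (ha_le j).trans hx'y⟩
  · have hi : ¬ (i : ℕ) + 1 = k := by have := j.isLt; omega
    have hij' : ((i : ℕ) : ℝ) < (j : ℕ) := by exact_mod_cast hij
    simp only [b, if_neg hi, a]; nlinarith
  · let last : Fin k := ⟨k - 1, by omega⟩
    rw [Fintype.sum_eq_single last fun j hj => ?_]
    · simp only [b, last, if_pos (Nat.sub_add_cancel hk), ha_last last (Nat.sub_add_cancel hk)]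
    · have hj' : ¬ (j : ℕ) + 1 = k := fun h => hj (Fin.ext (by simp only [last]; omega))
      simp only [b, if_neg hj', Icc_self, hV]

lemma setIntegral_Icc_eq_intervalIntegral {μ : Measure ℝ} [NullSingletonClass μ] {f : ℝ → ℝ}
    {x y : ℝ} (hxy : x ≤ y) : ∫ t in Icc x y, f t ∂μ = ∫ t in x..y, f t ∂μ := by
  rw [intervalIntegral.integral_of_le hxy, integral_Icc_eq_integral_Ioc]

theorem sSup_packingValues_eq_intervalIntegral {k : ℕ} (hk : 1 ≤ k) {f : ℝ → ℝ} (hf : Integrable f)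
    (hf_nonneg : ∀ x, 0 ≤ f x) {x y : ℝ} (hxy : x ≤ y) :
    sSup (packingValues k (fun S => ∫ t in S, f t) x y) = ∫ t in x..y, f t := by
  rw [← setIntegral_Icc_eq_intervalIntegral hxy]
  have hle : ∀ s ∈ packingValues k (fun S => ∫ t in S, f t) x y,
      s ≤ ∫ t in Icc x y, f t := by
    rintro s ⟨a, b, hab, hdisj, rfl⟩
    exact sum_setIntegral_le_setIntegral_of_pairwise_disjoint hf.integrableOn
      (Eventually.of_forall hf_nonneg) (fun _ => measurableSet_Icc)
      (fun j => Icc_subset_Icc (hab j).1 (hab j).2.2) hdisj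
  rcases hxy.eq_or_lt with rfl | hxy
  · -- For `k ≥ 2` no packing of a point exists, and then `sSup ∅ = 0` in `ℝ`.
    have hpt : ∫ t in Icc x x, f t = 0 := by simp
    rw [hpt] at hle ⊢
    refine le_antisymm (Real.sSup_nonpos hle) (Real.sSup_nonneg ?_)
    rintro s ⟨a, b, -, -, rfl⟩
    exact Finset.sum_nonneg fun j _ => setIntegral_nonneg measurableSet_Icc fun t _ => hf_nonneg t
  have hmem : ∀ x' ∈ Ioo x y,
      ∫ t in x'..y, f t ∈ packingValues k (fun S => ∫ t in S, f t) x y := fun x' hx' => by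
    rw [← setIntegral_Icc_eq_intervalIntegral hx'.2.le]
    exact apply_Icc_mem_packingValues hk (fun c => by simp) hx'.1 hx'.2.le
  have htends :
      Tendsto (fun x' => ∫ t in x'..y, f t) (𝓝[>] x) (𝓝 (∫ t in x..y, f t)) := by
    have hcont : Continuous fun x' => -∫ t in y..x', f t := (hf.continuous_primitive y).neg
    simp only [← intervalIntegral.integral_symm] at hcont
    exact hcont.continuousAt.tendsto.mono_left nhdsWithin_le_nhds
  rw [setIntegral_Icc_eq_intervalIntegral hxy.le] at hle ⊢
  have hnear : ∀ᶠ x' in 𝓝[>] x, x' ∈ Ioo x y := Ioo_mem_nhdsGT hxy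
  refine csSup_eq_of_forall_le_of_forall_lt_exists_gt ?_ hle fun w hw => ?_
  · obtain ⟨x', hx'⟩ := hnear.exists
    exact ⟨_, hmem x' hx'⟩
  · obtain ⟨x', hx', hwx'⟩ := (hnear.and (htends.eventually (lt_mem_nhds hw))).exists
    exact ⟨_, hmem x' hx', hwx'⟩

theorem exists_mem_Ioo_eq_of_monotoneOn_of_antitoneOn {F G : ℝ → ℝ} {a b : ℝ} (hab : a < b)
    (hFc : ContinuousOn F (Icc a b)) (hGc : ContinuousOn G (Icc a b))
    (hF : MonotoneOn F (Icc a b)) (hG : AntitoneOn G (Icc a b))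
    (hFa : F a = 0) (hGb : G b = 0) (hFG : F b = G a) : ∃ x ∈ Ioo a b, F x = G x := by
  have ha : a ∈ Icc a b := left_mem_Icc.2 hab.le
  have hb : b ∈ Icc a b := right_mem_Icc.2 hab.le
  rcases (hFa ▸ hF ha hb hab.le : 0 ≤ F b).eq_or_lt with hFb | hFb
  · -- Both functions vanish identically, so any interior point will do.
    have hmid : (a + b) / 2 ∈ Ioo a b := ⟨by linarith, by linarith⟩
    have hmid' : (a + b) / 2 ∈ Icc a b := Ioo_subset_Icc_self hmid
    refine ⟨_, hmid, ?_⟩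
    have h₁ := hF ha hmid' hmid.1.le
    have h₂ := hF hmid' hb hmid.2.le
    have h₃ := hG ha hmid' hmid.1.le
    have h₄ := hG hmid' hb hmid.2.le
    linarith
  · have hzero : (0 : ℝ) ∈ Ioo ((F - G) a) ((F - G) b) := by
      simp only [Pi.sub_apply, hFa, hGb, ← hFG]
      constructor <;> linarith
    obtain ⟨x, hx, hFGx⟩ := intermediate_value_Ioo hab.le (hFc.sub hGc) hzero
    exact ⟨x, hx, sub_eq_zero.1 hFGx⟩

/-- Existence of a halving point for the `k`-interval utility (key step of
the two-agent envy-free division). `V` is the nonatomic measure given by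
integrating a nonnegative integrable density `f`, and `U x y` is the maximum
value of at most `k` pairwise-disjoint closed subintervals of `[x, y]`.
Then `x ↦ U 0 x` is continuous and nondecreasing from `0`, `x ↦ U x m` is
continuous and nonincreasing to `0`, and consequently there is a point
`x_A ∈ (0, m)` with `U 0 x_A = U x_A m`. -/
theorem stmt_17 (k : ℕ) (hk : 1 ≤ k) (m : ℝ) (hm : 0 < m)
    (f : ℝ → ℝ) (hf : Integrable f) (hfpos : ∀ x, 0 ≤ f x)
    (V : Set ℝ → ℝ) (hV : ∀ S, V S = ∫ x in S, f x)
    (U : ℝ → ℝ → ℝ)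
    (hU : ∀ x y, U x y = sSup {s : ℝ | ∃ a b : Fin k → ℝ,
      (∀ j, x ≤ a j ∧ a j ≤ b j ∧ b j ≤ y) ∧
      Pairwise (Function.onFun Disjoint (fun j => Set.Icc (a j) (b j))) ∧
      s = ∑ j, V (Set.Icc (a j) (b j))}) :
    ContinuousOn (fun x => U 0 x) (Set.Icc 0 m) ∧
    MonotoneOn (fun x => U 0 x) (Set.Icc 0 m) ∧
    U 0 0 = 0 ∧
    ContinuousOn (fun x => U x m) (Set.Icc 0 m) ∧
    AntitoneOn (fun x => U x m) (Set.Icc 0 m) ∧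
    U m m = 0 ∧
    ∃ xA ∈ Set.Ioo 0 m, U 0 xA = U xA m := by
  obtain rfl : V = fun S => ∫ x in S, f x := funext hV
  have hU_eq_integral : ∀ x y, x ≤ y → U x y = ∫ t in x..y, f t := fun x y hxy =>
    (hU x y).trans (sSup_packingValues_eq_intervalIntegral hk hf hfpos hxy)
  have hcont₀ : ContinuousOn (fun x => U 0 x) (Icc 0 m) := by
    refine (intervalIntegral.continuousOn_primitive_interval (b := m) hf.integrableOn).mono ?_
      |>.congr fun x hx => hU_eq_integral 0 x hx.1
    rw [uIcc_of_le hm.le]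
  have hcont₁ : ContinuousOn (fun x => U x m) (Icc 0 m) := by
    refine (intervalIntegral.continuousOn_primitive_interval_left (a := 0) hf.integrableOn).mono ?_
      |>.congr fun x hx => hU_eq_integral x m hx.2
    rw [uIcc_of_le hm.le]
  have hmono : MonotoneOn (fun x => U 0 x) (Icc 0 m) := fun a ha b hb hab => by
    simp only [hU_eq_integral 0 a ha.1, hU_eq_integral 0 b hb.1]
    exact intervalIntegral.integral_mono_interval le_rfl ha.1 hab (Eventually.of_forall hfpos)
      hf.intervalIntegrable
  have hanti : AntitoneOn (fun x => U x m) (Icc 0 m) := fun a ha b hb hab => by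
    simp only [hU_eq_integral a m ha.2, hU_eq_integral b m hb.2]
    exact intervalIntegral.integral_mono_interval hab hb.2 le_rfl (Eventually.of_forall hfpos)
      hf.intervalIntegrable
  have hU₀₀ : U 0 0 = 0 := by simp [hU_eq_integral 0 0 le_rfl]
  have hUmm : U m m = 0 := by simp [hU_eq_integral m m le_rfl]
  exact ⟨hcont₀, hmono, hU₀₀, hcont₁, hanti, hUmm,
    exists_mem_Ioo_eq_of_monotoneOn_of_antitoneOn hm hcont₀ hcont₁ hmono hanti hU₀₀ hUmm rfl⟩
end

section
/- Let n ≥ 2, k ≥ 1, and let Z_L, Z_R partition a multicake of m islands by a single cut, containing m_L ≥ k and m_R ≥ k intervals respectively with m_L + m_R ≤ m + 1. If an agent's measure V satisfies V(Z_L) + V(Z_R) ≥ m + 1, then for some side j ∈ {L, R}, the k most valuable intervals in Z_j have total value at least k. -/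
lemma topk {N k : ℕ} (hk : 1 ≤ k) (hkN : k ≤ N) (a : Fin N → ℝ)
    (ha : ∀ i, 0 ≤ a i) (hsum : (N : ℝ) ≤ ∑ i, a i) :
    ∃ S : Finset (Fin N), S.card = k ∧ (k : ℝ) ≤ ∑ i ∈ S, a i := by
  have hP : ((Finset.univ : Finset (Fin N)).powersetCard k).Nonempty := by
    apply Finset.powersetCard_nonempty.2
    simpa using hkN
  obtain ⟨S, hSmem, hSmax⟩ := Finset.exists_max_image _ (fun S => ∑ i ∈ S, a i) hP
  rw [Finset.mem_powersetCard] at hSmem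
  obtain ⟨-, hScard⟩ := hSmem
  refine ⟨S, hScard, ?_⟩
  -- every element outside S is ≤ every element inside S
  have hswap : ∀ i ∉ S, ∀ j ∈ S, a i ≤ a j := by
    intro i hi j hj
    by_contra hlt
    push_neg at hlt
    set S' := insert i (S.erase j) with hS'
    have hiS' : i ∉ S.erase j := fun h => hi (Finset.mem_of_mem_erase h)
    have hcard' : S'.card = k := by
      rw [hS', Finset.card_insert_of_notMem hiS', Finset.card_erase_of_mem hj,
        hScard]
      omega
    have hmem' : S' ∈ (Finset.univ : Finset (Fin N)).powersetCard k := by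
      rw [Finset.mem_powersetCard]
      exact ⟨Finset.subset_univ _, hcard'⟩
    have h1 : ∑ x ∈ S', a x = a i + (∑ x ∈ S, a x - a j) := by
      rw [hS', Finset.sum_insert hiS', Finset.sum_erase_eq_sub hj]
    have := hSmax S' hmem'
    rw [h1] at this
    linarith
  -- each outside element is ≤ the average of S
  have hSsum : 0 ≤ ∑ i ∈ S, a i := Finset.sum_nonneg fun i _ => ha i
  have hout : ∀ i ∉ S, (k : ℝ) * a i ≤ ∑ j ∈ S, a j := by
    intro i hi
    calc (k : ℝ) * a i = ∑ j ∈ S, a i := by rw [Finset.sum_const, hScard]; ring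
    _ ≤ ∑ j ∈ S, a j := Finset.sum_le_sum fun j hj => hswap i hi j hj
  have hcompl : (k : ℝ) * ∑ i ∈ Sᶜ, a i ≤ ((N : ℝ) - k) * ∑ j ∈ S, a j := by
    have : ∑ i ∈ Sᶜ, (k : ℝ) * a i ≤ ∑ i ∈ Sᶜ, ∑ j ∈ S, a j :=
      Finset.sum_le_sum fun i hi => hout i (Finset.mem_compl.1 hi)
    rw [← Finset.mul_sum, Finset.sum_const, Finset.card_compl, hScard,
      Fintype.card_fin, nsmul_eq_mul] at this
    have hNk : ((N - k : ℕ) : ℝ) = (N : ℝ) - k := by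
      push_cast [Nat.cast_sub hkN]; ring
    linarith [this, hNk ▸ this]
  have hsplit : ∑ i, a i = ∑ i ∈ S, a i + ∑ i ∈ Sᶜ, a i :=
    (Finset.sum_add_sum_compl S a).symm
  have hk0 : (0 : ℝ) < k := by exact_mod_cast hk
  have hN0 : (0 : ℝ) < N := by
    have : 1 ≤ N := le_trans hk hkN
    exact_mod_cast Nat.lt_of_lt_of_le Nat.zero_lt_one this
  -- k * N ≤ k * total = k*sum_S + k*sum_Sc ≤ k*sum_S + (N-k)*sum_S = N*sum_S
  nlinarith [mul_le_mul_of_nonneg_left hsum (le_of_lt hk0)]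

/-- Case 1 of the two-agent envy-free proof. The two sides `Z_L`, `Z_R` of a
single cut of the multicake consist of `m_L ≥ k` and `m_R ≥ k` intervals
respectively, with `m_L + m_R ≤ m + 1`, and the agent's additive valuation
(given by the interval values `aL`, `aR ≥ 0`) satisfies
`V(Z_L) + V(Z_R) ≥ m + 1`. Then on one of the sides, the `k` most valuable
intervals have total value at least `k`: some `k` intervals on that side have
total value at least `k`. -/
theorem stmt_18 (n m k mL mR : ℕ) (hn : 2 ≤ n) (hk : 1 ≤ k) (hm : 1 ≤ m)
    (hmL : k ≤ mL) (hmR : k ≤ mR) (hcount : mL + mR ≤ m + 1)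
    (aL : Fin mL → ℝ) (aR : Fin mR → ℝ)
    (hL : ∀ i, 0 ≤ aL i) (hR : ∀ i, 0 ≤ aR i)
    (htot : (m : ℝ) + 1 ≤ (∑ i, aL i) + ∑ i, aR i) :
    (∃ S : Finset (Fin mL), S.card = k ∧ (k : ℝ) ≤ ∑ i ∈ S, aL i) ∨
    (∃ S : Finset (Fin mR), S.card = k ∧ (k : ℝ) ≤ ∑ i ∈ S, aR i) := by
  have hcast : ((mL : ℝ) + mR) ≤ (m : ℝ) + 1 := by exact_mod_cast hcount
  by_cases h : (mL : ℝ) ≤ ∑ i, aL i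
  · exact Or.inl (topk hk hmL aL hL h)
  · right
    apply topk hk hmR aR hR
    push_neg at h
    linarith
end
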